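/- Suppose a/(c·b^x) > 1 is a fraction in lowest terms (a, b, c, x positive integers, gcd(a, c·b^x) = 1), that a/(c·b^x) = I(x, n) for some positive integer n, and that c·b^x has a divisor of the form d^x where d = ∏_{i=1}^{s} p_i^{k_i}, satisfying I(x, p_i·d) > a/(c·b^x) for all 1 ≤ i ≤ s. Then (d^x/σ_x(d))·(a/(c·b^x)) = I(x, m) for some positive integer m, i.e., it is also an x-th abundancy index. -/

import Mathlib

/-!
Since `a / (c b^x)` is in lowest terms and equals `σ_x(n) / n^x`, the denominator `c b^x` divides
`n^x`; hence `d^x ∣ n^x` and `d ∣ n`. If some `p_i` divided `n / d`, then `p_i d ∣ n`, and since the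
abundancy index is monotone along divisibility, `I(x, p_i d) ≤ I(x, n)`, against the hypothesis.
So `d` and `m = n / d` are coprime, and multiplicativity gives `I(x, n) = I(x, d) I(x, m)`.
-/

open Finset Nat

/-- Sum of x-th powers of divisors. -/
def sigmaX (x n : ℕ) : ℕ := ∑ d ∈ n.divisors, d ^ x

/-- The x-th abundancy index as a rational number. -/
def Iq (x n : ℕ) : ℚ := (sigmaX x n : ℚ) / (n : ℚ) ^ x

lemma sigmaX_eq_sigma (x n : ℕ) : sigmaX x n = ArithmeticFunction.sigma x n := by
  rw [sigmaX, ArithmeticFunction.sigma_apply]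

lemma sigmaX_pos {x n : ℕ} (hn : n ≠ 0) : 0 < sigmaX x n :=
  sigmaX_eq_sigma x n ▸ ArithmeticFunction.sigma_pos x n hn

lemma Iq_eq_sum_inv_pow (x n : ℕ) : Iq x n = ∑ e ∈ n.divisors, ((e : ℚ)⁻¹) ^ x := by
  rw [Iq, sigmaX, ← Nat.sum_div_divisors, Nat.cast_sum, Finset.sum_div]
  refine Finset.sum_congr rfl fun e he => ?_
  obtain ⟨hen, hn⟩ := Nat.mem_divisors.mp he
  have he0 : (e : ℚ) ≠ 0 := Nat.cast_ne_zero.mpr (Nat.pos_of_mem_divisors he).ne'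
  have hn0 : (n : ℚ) ≠ 0 := Nat.cast_ne_zero.mpr hn
  rw [Nat.cast_pow, Nat.cast_div hen he0, inv_pow, div_pow]
  field_simp

lemma Iq_le_of_dvd {x m n : ℕ} (hmn : m ∣ n) (hn : n ≠ 0) : Iq x m ≤ Iq x n := by
  rw [Iq_eq_sum_inv_pow, Iq_eq_sum_inv_pow]
  exact Finset.sum_le_sum_of_subset_of_nonneg (Nat.divisors_subset_of_dvd hn hmn)
    fun _ _ _ => by positivity

lemma Iq_mul_of_coprime {x m n : ℕ} (h : Nat.Coprime m n) : Iq x (m * n) = Iq x m * Iq x n := by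
  simp only [Iq, sigmaX_eq_sigma,
    ArithmeticFunction.isMultiplicative_sigma.map_mul_of_coprime h, Nat.cast_mul, mul_pow]
  exact mul_div_mul_comm _ _ _ _

lemma dvd_of_div_eq_div_of_coprime {u v a N : ℕ} (hv : v ≠ 0) (hN : N ≠ 0)
    (h : (u : ℚ) / v = a / N) (hcop : Nat.Coprime a N) : N ∣ v := by
  rw [div_eq_div_iff (by exact_mod_cast hv) (by exact_mod_cast hN)] at h
  have hcross : u * N = a * v := by exact_mod_cast h
  exact hcop.symm.dvd_of_dvd_mul_left ⟨u, by rw [← hcross, mul_comm]⟩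

lemma exists_eq_of_prime_dvd_prod_pow {ι : Type*} {t : Finset ι} {p k : ι → ℕ}
    (hp : ∀ i ∈ t, (p i).Prime) {q : ℕ} (hq : q.Prime) (hqd : q ∣ ∏ i ∈ t, p i ^ k i) :
    ∃ i ∈ t, q = p i := by
  obtain ⟨i, hi, hqi⟩ := (Prime.dvd_finsetProd_iff hq.prime _).mp hqd
  exact ⟨i, hi, (Nat.prime_dvd_prime_iff_eq hq (hp i hi)).mp (hq.dvd_of_dvd_pow hqi)⟩

lemma coprime_div_of_forall_prime_mul_not_dvd {d n : ℕ} (hdn : d ∣ n)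
    (h : ∀ q, q.Prime → q ∣ d → ¬ d * q ∣ n) : Nat.Coprime d (n / d) :=
  Nat.coprime_of_dvd fun q hq hqd hqn => h q hq hqd (Nat.mul_dvd_of_dvd_div hdn hqn)

theorem stmt_15_general (x a b c s : ℕ) (hx : 0 < x) (hb : 0 < b) (hc : 0 < c)
    (hcop : Nat.gcd a (c * b ^ x) = 1)
    (n : ℕ) (hn : 0 < n) (hIn : Iq x n = (a : ℚ) / ((c : ℚ) * (b : ℚ) ^ x))
    (p : Fin s → ℕ) (k : Fin s → ℕ)
    (hp : ∀ i, (p i).Prime)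
    (d : ℕ) (hd : d = ∏ i, p i ^ k i)
    (hddvd : d ^ x ∣ c * b ^ x)
    (hgtI : ∀ i, Iq x (p i * d) > (a : ℚ) / ((c : ℚ) * (b : ℚ) ^ x)) :
    ∃ m : ℕ, 0 < m ∧
      Iq x m = ((d : ℚ) ^ x / (sigmaX x d : ℚ)) * ((a : ℚ) / ((c : ℚ) * (b : ℚ) ^ x)) := by
  have hd0 : d ≠ 0 := hd ▸ Finset.prod_ne_zero_iff.mpr fun i _ => pow_ne_zero _ (hp i).ne_zero
  have hden : c * b ^ x ∣ n ^ x :=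
    dvd_of_div_eq_div_of_coprime (pow_ne_zero x hn.ne') (by positivity)
      (by push_cast; rw [← hIn, Iq]) hcop
  have hdn : d ∣ n := (Nat.pow_dvd_pow_iff hx.ne').mp (hddvd.trans hden)
  have hcopd : Nat.Coprime d (n / d) := by
    refine coprime_div_of_forall_prime_mul_not_dvd hdn fun q hq hqd hqdn => ?_
    obtain ⟨i, -, rfl⟩ := exists_eq_of_prime_dvd_prod_pow (fun i _ => hp i) hq (hd ▸ hqd)
    have hle := Iq_le_of_dvd (x := x) (mul_comm d (p i) ▸ hqdn) hn.ne'
    linarith [hgtI i]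
  have hmul : Iq x n = Iq x d * Iq x (n / d) := by
    rw [← Iq_mul_of_coprime hcopd, Nat.mul_div_cancel' hdn]
  refine ⟨n / d, Nat.div_pos (Nat.le_of_dvd hn hdn) (Nat.pos_of_ne_zero hd0), ?_⟩
  have hsd : (sigmaX x d : ℚ) ≠ 0 := Nat.cast_ne_zero.mpr (sigmaX_pos hd0).ne'
  have hdx : (d : ℚ) ^ x ≠ 0 := pow_ne_zero x (Nat.cast_ne_zero.mpr hd0)
  rw [← hIn, hmul]
  unfold Iq
  field_simp

theorem stmt_15 (x a b c s : ℕ) (hx : 0 < x) (ha : 0 < a) (hb : 0 < b) (hc : 0 < c)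
    (hs : 0 < s)
    (hgt : (1 : ℚ) < (a : ℚ) / ((c : ℚ) * (b : ℚ) ^ x))
    (hcop : Nat.gcd a (c * b ^ x) = 1)
    (n : ℕ) (hn : 0 < n) (hIn : Iq x n = (a : ℚ) / ((c : ℚ) * (b : ℚ) ^ x))
    (p : Fin s → ℕ) (k : Fin s → ℕ)
    (hp : ∀ i, (p i).Prime) (hinj : Function.Injective p) (hk : ∀ i, 0 < k i)
    (d : ℕ) (hd : d = ∏ i, p i ^ k i)
    (hddvd : d ^ x ∣ c * b ^ x)
    (hgtI : ∀ i, Iq x (p i * d) > (a : ℚ) / ((c : ℚ) * (b : ℚ) ^ x)) :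
    ∃ m : ℕ, 0 < m ∧
      Iq x m = ((d : ℚ) ^ x / (sigmaX x d : ℚ)) * ((a : ℚ) / ((c : ℚ) * (b : ℚ) ^ x)) :=
  stmt_15_general x a b c s hx hb hc hcop n hn hIn p k hp d hd hddvd hgtI
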